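/- Let X be a finite set with |X| = n, let m ≥ 1 be an integer, let ω = exp(2πi/m), and let B be the set of functions b : X → ZMod m whose support has size at most q. For a family of complex coefficients (β_b)_{b∈B}, define α(f) = Σ_{b∈B} β_b · ω^{Σ_{x∈X} (f(x)·b(x)).val} for each f : X → ZMod m. If there exists a function f̂ : X → ZMod m with α(f̂) = 1, then the average (1/m^n)·Σ_{g : X → ZMod m} |α(g)|² is at least 1 / (Σ_{i=0}^{q} C(n, i)·(m−1)^i). -/

import Mathlib

/-!
For `b : X → ZMod m`, the map `g ↦ ω ^ (g ⬝ᵥ b).val` is an additive character of `X → ZMod m`,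
and distinct `b` give distinct characters. By orthogonality of characters, the average of `|α|²`
is therefore `∑ b ∈ B, |β b|²`. As the characters have modulus one, `α f̂ = 1` gives
`1 ≤ ∑ b ∈ B, |β b|`, hence `1 ≤ #B * ∑ b ∈ B, |β b|²` by Cauchy–Schwarz, and `#B`, the size of
the Hamming ball of radius `q` in `(ZMod m)ⁿ`, is `∑ i ≤ q, C(n, i) (m - 1)ⁱ`.
-/
open Finset ComplexConjugate

namespace AddChar

section Orthogonality
variable {G : Type*} [AddCommGroup G] [Fintype G]

theorem sum_mul_conj_eq_ite (ψ₁ ψ₂ : AddChar G ℂ) :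
    ∑ g, ψ₁ g * conj (ψ₂ g) = if ψ₁ = ψ₂ then (Fintype.card G : ℂ) else 0 := by
  classical
  have h : ∀ g, ψ₁ g * conj (ψ₂ g) = (ψ₁ - ψ₂) g := fun g => by
    rw [sub_apply, map_neg_eq_conj]
  simp_rw [h, sum_eq_ite, sub_eq_zero]

theorem sum_norm_sum_mul_apply_sq {ι : Type*} (ψ : ι → AddChar G ℂ) {B : Finset ι}
    (hψ : Set.InjOn ψ B) (β : ι → ℂ) :
    ∑ g, ‖∑ b ∈ B, β b * ψ b g‖ ^ 2 = Fintype.card G * ∑ b ∈ B, ‖β b‖ ^ 2 := by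
  classical
  apply Complex.ofReal_injective
  push_cast
  simp_rw [← Complex.mul_conj', map_sum, sum_mul_sum, map_mul]
  calc ∑ g, ∑ b ∈ B, ∑ b' ∈ B, β b * ψ b g * (conj (β b') * conj (ψ b' g))
      = ∑ b ∈ B, ∑ b' ∈ B, β b * conj (β b') * ∑ g, ψ b g * conj (ψ b' g) := by
        simp_rw [mul_sum]
        rw [sum_comm]; refine sum_congr rfl fun b _ => ?_
        rw [sum_comm]; refine sum_congr rfl fun b' _ => ?_
        refine sum_congr rfl fun g _ => ?_
        ring
    _ = ∑ b ∈ B, β b * conj (β b) * Fintype.card G := by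
        refine sum_congr rfl fun b hb => ?_
        rw [sum_eq_single_of_mem b hb fun b' hb' hne => ?_, sum_mul_conj_eq_ite, if_pos rfl]
        rw [sum_mul_conj_eq_ite, if_neg fun h => hne (hψ hb' hb h.symm), mul_zero]
    _ = _ := by rw [← sum_mul, mul_comm]
end Orthogonality

section DotProduct
variable {X R M : Type*} [Fintype X] [CommRing R] [CommMonoid M]

def dotProduct (ψ : AddChar R M) (b : X → R) : AddChar (X → R) M where
  toFun g := ψ (g ⬝ᵥ b)
  map_zero_eq_one' := by rw [zero_dotProduct, map_zero_eq_one]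
  map_add_eq_mul' g g' := by rw [add_dotProduct, map_add_eq_mul]

@[simp] theorem dotProduct_apply (ψ : AddChar R M) (b g : X → R) :
    ψ.dotProduct b g = ψ (g ⬝ᵥ b) := rfl

theorem dotProduct_injective {ψ : AddChar R M} (hψ : Function.Injective ψ) :
    Function.Injective (ψ.dotProduct : (X → R) → AddChar (X → R) M) := by
  classical
  intro b b' h
  funext x
  have := DFunLike.congr_fun h (Pi.single x 1)
  simpa [single_dotProduct] using hψ this
end DotProduct

end AddChar

theorem ZMod.exp_two_pi_I_div_pow_eq_stdAddChar (m k : ℕ) [NeZero m] :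
    Complex.exp (2 * Real.pi * Complex.I / m) ^ k = ZMod.stdAddChar (k : ZMod m) := by
  rw [ZMod.stdAddChar_apply, ZMod.toCircle_natCast, ← Complex.exp_nat_mul]
  ring_nf

section HammingBall
variable {X R : Type*} [Fintype X] [DecidableEq X] [Fintype R] [DecidableEq R] [Zero R]

theorem card_filter_support_eq (S : Finset X) :
    #{b : X → R | ({x | b x ≠ 0} : Finset X) = S} = (Fintype.card R - 1) ^ #S := by
  have : ({b : X → R | ({x | b x ≠ 0} : Finset X) = S} : Finset _)
      = Fintype.piFinset fun x => if x ∈ S then univ.erase 0 else {0} := by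
    ext b
    simp only [mem_filter, mem_univ, true_and, Fintype.mem_piFinset, Finset.ext_iff]
    refine forall_congr' fun x => ?_
    split_ifs with hx <;> simp [hx]
  simp [this, apply_ite, prod_ite_mem, card_erase_of_mem]

theorem card_hammingNorm_eq (i : ℕ) :
    #{b : X → R | hammingNorm b = i} = (Fintype.card X).choose i * (Fintype.card R - 1) ^ i := by
  have hmaps : Set.MapsTo (fun b : X → R => ({x | b x ≠ 0} : Finset X))
      (({b | hammingNorm b = i} : Finset (X → R)) : Set (X → R))
      ((powersetCard i univ : Finset (Finset X)) : Set (Finset X)) := fun b hb =>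
    mem_powersetCard.2 ⟨subset_univ _, (mem_filter.1 hb).2⟩
  rw [card_eq_sum_card_fiberwise hmaps, sum_congr rfl (g := fun _ => (Fintype.card R - 1) ^ i),
    sum_const, card_powersetCard, card_univ, smul_eq_mul]
  intro S hS
  rw [← (mem_powersetCard.1 hS).2, ← card_filter_support_eq, filter_filter]
  congr 1
  ext b
  simp only [mem_filter, mem_univ, true_and, and_iff_right_iff_imp]
  rintro rfl
  rfl

theorem card_hammingNorm_le (q : ℕ) :
    #{b : X → R | hammingNorm b ≤ q}
      = ∑ i ∈ range (q + 1), (Fintype.card X).choose i * (Fintype.card R - 1) ^ i := by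
  have hmaps : Set.MapsTo hammingNorm
      (({b | hammingNorm b ≤ q} : Finset (X → R)) : Set (X → R))
      ((range (q + 1) : Finset ℕ) : Set ℕ) := fun b hb =>
    mem_range.2 (Nat.lt_succ_of_le (mem_filter.1 hb).2)
  rw [card_eq_sum_card_fiberwise hmaps]
  refine sum_congr rfl fun i hi => ?_
  rw [← card_hammingNorm_eq, filter_filter]
  congr 1
  ext b
  simp only [mem_filter, mem_univ, true_and, and_iff_right_iff_imp]
  rintro rfl
  exact Nat.lt_succ_iff.1 (mem_range.1 hi)
end HammingBall

theorem sq_norm_sum_mul_le_card_mul_sum_sq {𝕜 ι : Type*} [SeminormedRing 𝕜] (B : Finset ι)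
    (β u : ι → 𝕜) (hu : ∀ b ∈ B, ‖u b‖ ≤ 1) :
    ‖∑ b ∈ B, β b * u b‖ ^ 2 ≤ #B * ∑ b ∈ B, ‖β b‖ ^ 2 := by
  have hle : ‖∑ b ∈ B, β b * u b‖ ≤ ∑ b ∈ B, ‖β b‖ :=
    (norm_sum_le _ _).trans <| sum_le_sum fun b hb =>
      (norm_mul_le _ _).trans <| mul_le_of_le_one_right (norm_nonneg _) (hu b hb)
  exact (pow_le_pow_left₀ (norm_nonneg _) hle 2).trans sq_sum_le_card_mul_sum_sq

theorem stmt_5 (X : Type) [Fintype X] [DecidableEq X] (n m q : ℕ) [NeZero m]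
    (hn : Fintype.card X = n)
    (ω : ℂ) (hω : ω = Complex.exp (2 * Real.pi * Complex.I / m))
    (B : Finset (X → ZMod m))
    (hB : B = Finset.univ.filter
      (fun b : X → ZMod m => (Finset.univ.filter fun x => b x ≠ 0).card ≤ q))
    (β : (X → ZMod m) → ℂ) (α : (X → ZMod m) → ℂ)
    (hα : ∀ f, α f = ∑ b ∈ B, β b * ω ^ (∑ x, (f x * b x).val))
    (hf : ∃ f : X → ZMod m, α f = 1) :
    (1 / (m : ℝ) ^ n) * ∑ g : X → ZMod m, ‖α g‖ ^ 2
      ≥ 1 / ∑ i ∈ Finset.range (q + 1), ((n.choose i * (m - 1) ^ i : ℕ) : ℝ) := by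
  classical
  obtain ⟨f, hf⟩ := hf
  set χ := (ZMod.stdAddChar (N := m)).dotProduct (X := X)
  have hαχ : ∀ g, α g = ∑ b ∈ B, β b * χ b g := fun g => by
    simp only [hα, hω, ZMod.exp_two_pi_I_div_pow_eq_stdAddChar, Nat.cast_sum,
      ZMod.natCast_zmod_val, χ, AddChar.dotProduct_apply, dotProduct]
  have hparseval : ∑ g, ‖α g‖ ^ 2 = (m : ℝ) ^ n * ∑ b ∈ B, ‖β b‖ ^ 2 := by
    simp_rw [hαχ]
    rw [AddChar.sum_norm_sum_mul_apply_sq _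
      (AddChar.dotProduct_injective ZMod.injective_stdAddChar).injOn]
    simp [hn]
  have hcard : #B = ∑ i ∈ range (q + 1), n.choose i * (m - 1) ^ i := by
    subst hn hB
    have := card_hammingNorm_le (X := X) (R := ZMod m) q
    rwa [ZMod.card] at this
  have hCS : 1 ≤ (#B : ℝ) * ∑ b ∈ B, ‖β b‖ ^ 2 := by
    simpa [← hαχ, hf] using sq_norm_sum_mul_le_card_mul_sum_sq B β (χ · f) fun b _ => by simp
  rw [hparseval, ← Nat.cast_sum, ← hcard, ← mul_assoc,
    one_div_mul_cancel (pow_ne_zero _ (NeZero.ne _)), one_mul, ge_iff_le,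
    div_le_iff₀ (pos_of_mul_pos_left (one_pos.trans_le hCS) (by positivity)), mul_comm]
  exact hCS
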